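/- (Unconditional beam SINR distribution.) Let M ≥ 2 be an integer, let ρ, D > 0, and let G : (0,∞) → (0,∞) be a continuous, positive, nonincreasing function. Let R, E, S be mutually independent real random variables where R has cumulative distribution function r ↦ (r/D)² on [0, D], E has the exponential distribution with rate 1, and S has the Gamma distribution with shape M−1 and rate 1. Then for every x > 0, P( E / ( (ρ G(R))^{-1} + S ) ≤ x ) = 1 − (x+1)^{1−M} (1/D²) ∫_0^{D²} exp( −x / (G(√t) ρ) ) dt. -/

import Mathlib

/-!
Given `R` and `S`, the event `E ≤ x N` with `N = (ρ G(R))⁻¹ + S` has probability `1 - exp (-x N)`,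
since `E ~ Exp(1)` is independent of `(R, S)`. Independence of `R` and `S` factors `𝔼[exp (-x N)]`
into the Laplace transform `(1 + x)^{1-M}` of `Gamma(M-1, 1)` and `𝔼[exp (-x / (ρ G(R)))]`; as the
CDF of `R` is `(r/D)²`, `R` is distributed as `√T` with `T` uniform on `(0, D²]`, which turns the
latter expectation into `(1/D²) ∫₀^{D²} exp (-x / (G(√t) ρ)) dt`.
-/

open MeasureTheory ProbabilityTheory Real Set

theorem ContinuousOn.exists_measurable_pos_eqOn {α : Type*} [TopologicalSpace α]
    [MeasurableSpace α] [OpensMeasurableSpace α] {G : α → ℝ} {s : Set α}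
    (hG : ContinuousOn G s) (hs : MeasurableSet s) (hpos : ∀ a ∈ s, 0 < G a) :
    ∃ G' : α → ℝ, Measurable G' ∧ (∀ a, 0 < G' a) ∧ EqOn G' G s := by
  classical
  refine ⟨s.piecewise G 1, hG.measurable_piecewise continuousOn_const hs, fun a ↦ ?_,
    fun a ha ↦ piecewise_eq_of_mem _ _ _ ha⟩
  by_cases ha : a ∈ s <;> simp [ha, hpos]

theorem ae_nonneg_gammaMeasure (a r : ℝ) : ∀ᵐ s ∂gammaMeasure a r, 0 ≤ s := by
  simp only [ae_iff, not_le, gammaMeasure, withDensity_apply' _ _]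
  exact lintegral_gammaPDF_of_nonpos le_rfl

theorem gammaPDF_mul_exp_neg_mul {a r x : ℝ} (ha : 0 < a) (hr : 0 < r) (hrx : 0 < r + x) (s : ℝ) :
    gammaPDF a r s * ENNReal.ofReal (exp (-(x * s)))
      = ENNReal.ofReal ((r / (r + x)) ^ a) * gammaPDF a (r + x) s := by
  rcases lt_or_ge s 0 with hs | hs
  · simp only [gammaPDF_of_neg hs, zero_mul, mul_zero]
  have hΓ := Gamma_pos_of_pos ha
  rw [gammaPDF_of_nonneg hs, gammaPDF_of_nonneg hs, ← ENNReal.ofReal_mul (by positivity),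
    ← ENNReal.ofReal_mul (by positivity), div_rpow hr.le hrx.le, mul_assoc _ (exp _),
    ← exp_add, show -(r * s) + -(x * s) = -((r + x) * s) by ring]
  field_simp

theorem integral_exp_neg_mul_gammaMeasure {a r x : ℝ} (ha : 0 < a) (hr : 0 < r)
    (hrx : 0 < r + x) :
    ∫ s, exp (-(x * s)) ∂gammaMeasure a r = (r / (r + x)) ^ a := by
  have hexp : Measurable fun s : ℝ ↦ exp (-(x * s)) := by fun_prop
  have hpdf (b : ℝ) : Measurable (gammaPDF a b) := (measurable_gammaPDFReal a b).ennreal_ofReal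
  rw [integral_eq_lintegral_of_nonneg_ae (ae_of_all _ fun s ↦ (exp_pos _).le)
      hexp.aestronglyMeasurable, gammaMeasure,
    lintegral_withDensity_eq_lintegral_mul _ (hpdf r) hexp.ennreal_ofReal]
  simp only [Pi.mul_apply, gammaPDF_mul_exp_neg_mul ha hr hrx]
  rw [lintegral_const_mul _ (hpdf _), lintegral_gammaPDF_eq_one ha hrx, mul_one,
    ENNReal.toReal_ofReal (by positivity)]

theorem MeasureTheory.Measure.eq_of_cdf_eqOn_Icc {μ ν : Measure ℝ} [IsProbabilityMeasure μ]
    [IsProbabilityMeasure ν] {a b : ℝ} (hab : a ≤ b) (ha : cdf μ a = 0) (hb : cdf μ b = 1)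
    (h : EqOn (cdf μ) (cdf ν) (Icc a b)) : μ = ν := by
  have ha' : cdf ν a = 0 := h ⟨le_rfl, hab⟩ ▸ ha
  have hb' : cdf ν b = 1 := h ⟨hab, le_rfl⟩ ▸ hb
  refine (Measure.cdf_eq_iff μ ν).mp (StieltjesFunction.ext fun t ↦ ?_)
  rcases lt_or_ge t a with hta | hat
  · have hμ := monotone_cdf μ hta.le
    have hν := monotone_cdf ν hta.le
    linarith [cdf_nonneg μ t, cdf_nonneg ν t]
  rcases le_or_gt t b with htb | hbt
  · exact h ⟨hat, htb⟩
  · have hμ := monotone_cdf μ hbt.le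
    have hν := monotone_cdf ν hbt.le
    linarith [cdf_le_one μ t, cdf_le_one ν t]

theorem ae_lt_of_cdf_eq_zero {μ : Measure ℝ} [IsProbabilityMeasure μ] {a : ℝ}
    (h : cdf μ a = 0) : ∀ᵐ t ∂μ, a < t := by
  have hIic : μ (Iic a) = 0 := by rw [← ofReal_cdf, h, ENNReal.ofReal_zero]
  exact ae_iff.mpr (measure_mono_null (fun t ht ↦ not_lt.mp ht) hIic)

theorem eq_map_sqrt_cond_of_cdf_eq_sq {μ : Measure ℝ} [IsProbabilityMeasure μ] {D : ℝ}
    (hD : 0 < D) (hμ : ∀ r ∈ Icc 0 D, cdf μ r = (r / D) ^ 2) :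
    μ = (volume[|Ioc 0 (D ^ 2)]).map sqrt := by
  have hD2 : 0 < D ^ 2 := by positivity
  have : IsProbabilityMeasure (volume[|Ioc 0 (D ^ 2)]) :=
    cond_isProbabilityMeasure_of_finite (by simp [hD.ne']) (by simp)
  have : IsProbabilityMeasure ((volume[|Ioc 0 (D ^ 2)]).map sqrt) :=
    Measure.isProbabilityMeasure_map continuous_sqrt.aemeasurable
  refine Measure.eq_of_cdf_eqOn_Icc hD.le (by simpa using hμ 0 ⟨le_rfl, hD.le⟩)
    (by simpa [hD.ne'] using hμ D ⟨hD.le, le_rfl⟩) fun r hr ↦ ?_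
  have hpre : sqrt ⁻¹' Iic r = Iic (r ^ 2) := by
    ext t; simp [sqrt_le_left hr.1]
  rw [hμ r hr, cdf_eq_real, map_measureReal_apply continuous_sqrt.measurable measurableSet_Iic,
    hpre, measureReal_def, cond_apply measurableSet_Ioc, Ioc_inter_Iic,
    min_eq_right (pow_le_pow_left₀ hr.1 hr.2 2), volume_Ioc, volume_Ioc, sub_zero, sub_zero,
    ENNReal.toReal_mul, ENNReal.toReal_inv, ENNReal.toReal_ofReal hD2.le,
    ENNReal.toReal_ofReal (sq_nonneg r), div_pow, inv_mul_eq_div]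

theorem integral_eq_of_cdf_eq_sq {μ : Measure ℝ} [IsProbabilityMeasure μ] {D : ℝ}
    (hD : 0 < D) (hμ : ∀ r ∈ Icc 0 D, cdf μ r = (r / D) ^ 2) {f : ℝ → ℝ} (hf : Measurable f) :
    ∫ r, f r ∂μ = 1 / D ^ 2 * ∫ t in 0..D ^ 2, f (sqrt t) := by
  rw [eq_map_sqrt_cond_of_cdf_eq_sq hD hμ, integral_map continuous_sqrt.aemeasurable
    hf.aestronglyMeasurable, ProbabilityTheory.cond, integral_smul_measure,
    intervalIntegral.integral_of_le (sq_nonneg D), volume_Ioc, sub_zero, ENNReal.toReal_inv,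
    ENNReal.toReal_ofReal (sq_nonneg D), smul_eq_mul, one_div]

theorem measureReal_le_of_indepFun_expMeasure {Ω : Type*} [MeasurableSpace Ω]
    {P : Measure Ω} [IsProbabilityMeasure P] {Y E : Ω → ℝ} {r : ℝ} (hr : 0 < r) (hY : Measurable Y)
    (hE : Measurable E) (hYE : IndepFun Y E P) (hElaw : P.map E = expMeasure r)
    (hY0 : ∀ᵐ ω ∂P, 0 ≤ Y ω) :
    P.real {ω | E ω ≤ Y ω} = 1 - ∫ ω, exp (-(r * Y ω)) ∂P := by
  have := isProbabilityMeasure_expMeasure hr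
  set F := cdf (expMeasure r)
  have hF : Measurable F := (monotone_cdf _).measurable
  have hs : MeasurableSet {p : ℝ × ℝ | p.2 ≤ p.1} := measurableSet_le measurable_snd measurable_fst
  have hFY : Integrable (fun ω ↦ F (Y ω)) P :=
    .of_bound (hF.comp hY).aestronglyMeasurable 1 (ae_of_all _ fun ω ↦ by
      rw [norm_of_nonneg (cdf_nonneg _ _)]; exact cdf_le_one _ _)
  have hexp : ∫ ω, exp (-(r * Y ω)) ∂P = ∫ ω, (1 - F (Y ω)) ∂P := by
    refine integral_congr_ae ?_
    filter_upwards [hY0] with ω hω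
    simp [F, cdf_expMeasure_eq hr, hω]
  calc P.real {ω | E ω ≤ Y ω} = ((P.map Y).prod (expMeasure r)).real {p | p.2 ≤ p.1} := by
        rw [← hElaw, ← (indepFun_iff_map_prod_eq_prod_map_map hY.aemeasurable
          hE.aemeasurable).mp hYE, map_measureReal_apply (hY.prodMk hE) hs]
        rfl
    _ = ∫ y, F y ∂(P.map Y) := by
        rw [measureReal_def, Measure.prod_apply hs, integral_eq_lintegral_of_nonneg_ae
          (ae_of_all _ (cdf_nonneg _)) hF.aestronglyMeasurable]
        simp only [ofReal_cdf]
        rfl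
    _ = 1 - ∫ ω, exp (-(r * Y ω)) ∂P := by
        rw [integral_map hY.aemeasurable hF.aestronglyMeasurable, hexp,
          integral_sub (integrable_const 1) hFY, integral_const]
        simp

theorem measureReal_div_add_le_of_iIndepFun {Ω : Type*} [MeasurableSpace Ω]
    {P : Measure Ω} [IsProbabilityMeasure P] {R E S : Ω → ℝ} {φ : ℝ → ℝ} {r x : ℝ}
    (hr : 0 < r) (hx : 0 < x) (hφ : Measurable φ) (hR : Measurable R) (hE : Measurable E)
    (hS : Measurable S)
    (hindep : iIndepFun ![R, E, S] P) (hElaw : P.map E = expMeasure r)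
    (hφR : ∀ᵐ ω ∂P, 0 < φ (R ω)) (hS0 : ∀ᵐ ω ∂P, 0 ≤ S ω) :
    P.real {ω | E ω / (φ (R ω) + S ω) ≤ x}
      = 1 - (∫ t, exp (-(r * x * φ t)) ∂P.map R) * ∫ s, exp (-(r * x * s)) ∂P.map S := by
  have hmeas : ∀ i, Measurable (![R, E, S] i) := fun i ↦ by fin_cases i <;> assumption
  have hRS : IndepFun R S P := hindep.indepFun (i := 0) (j := 2) (by decide)
  have hRSE : IndepFun (fun ω ↦ (R ω, S ω)) E P :=
    hindep.indepFun_prodMk hmeas 0 2 1 (by decide) (by decide)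
  have hY : Measurable fun p : ℝ × ℝ ↦ x * (φ p.1 + p.2) := by fun_prop
  have hf : Measurable fun t ↦ exp (-(r * x * φ t)) := by fun_prop
  have hg : Measurable fun s : ℝ ↦ exp (-(r * x * s)) := by fun_prop
  have hevent : {ω | E ω / (φ (R ω) + S ω) ≤ x} =ᵐ[P] {ω | E ω ≤ x * (φ (R ω) + S ω)} := by
    filter_upwards [hφR, hS0] with ω hRω hSω
    change (E ω / _ ≤ x) = (E ω ≤ _)
    rw [div_le_iff₀ (by positivity), mul_comm]
  rw [measureReal_congr hevent,
    measureReal_le_of_indepFun_expMeasure (Y := fun ω ↦ x * (φ (R ω) + S ω)) hr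
      (hY.comp (hR.prodMk hS)) hE (hRSE.comp hY measurable_id) hElaw
      (by filter_upwards [hφR, hS0] with ω hRω hSω; positivity),
    integral_map hR.aemeasurable hf.aestronglyMeasurable,
    integral_map hS.aemeasurable hg.aestronglyMeasurable,
    ← hRS.integral_fun_comp_mul_comp hR.aemeasurable hS.aemeasurable
      hf.aestronglyMeasurable hg.aestronglyMeasurable]
  congr 1
  refine integral_congr_ae (ae_of_all _ fun ω ↦ ?_)
  simp only [← exp_add]
  congr 1
  ring

theorem beam_sinr_cdf_unconditional_general
    {Ω : Type*} [MeasurableSpace Ω] (P : Measure Ω) [IsProbabilityMeasure P]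
    (M : ℕ) (hM : 2 ≤ M) (ρ D : ℝ) (hρ : 0 < ρ) (hD : 0 < D)
    (G : ℝ → ℝ) (hGpos : ∀ d, 0 < d → 0 < G d)
    (hGcont : ContinuousOn G (Set.Ioi 0))
    (R E S : Ω → ℝ)
    (hRm : Measurable R) (hEm : Measurable E) (hSm : Measurable S)
    (hindep : iIndepFun ![R, E, S] P)
    (hR : ∀ r ∈ Set.Icc (0 : ℝ) D, (P {ω | R ω ≤ r}).toReal = (r / D) ^ 2)
    (hE : P.map E = expMeasure 1)
    (hS : P.map S = gammaMeasure ((M : ℝ) - 1) 1) :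
    ∀ x : ℝ, 0 < x →
      (P {ω | E ω / ((ρ * G (R ω))⁻¹ + S ω) ≤ x}).toReal
        = 1 - (x + 1) ^ ((1 : ℝ) - M) * (1 / D ^ 2) *
            ∫ t in (0 : ℝ)..(D ^ 2), Real.exp (-x / (G (Real.sqrt t) * ρ)) := by
  intro x hx
  obtain ⟨G', hG'm, hG'pos, hG'G⟩ := hGcont.exists_measurable_pos_eqOn measurableSet_Ioi hGpos
  have := Measure.isProbabilityMeasure_map (μ := P) hRm.aemeasurable
  have hRcdf : ∀ r ∈ Icc 0 D, cdf (P.map R) r = (r / D) ^ 2 := fun r hr ↦ by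
    rw [cdf_eq_real, map_measureReal_apply hRm measurableSet_Iic, ← hR r hr]
    rfl
  have hRpos : ∀ᵐ ω ∂P, 0 < R ω := ae_of_ae_map hRm.aemeasurable
    (ae_lt_of_cdf_eq_zero (by simpa using hRcdf 0 ⟨le_rfl, hD.le⟩))
  have hevent : {ω | E ω / ((ρ * G (R ω))⁻¹ + S ω) ≤ x}
      =ᵐ[P] {ω | E ω / ((ρ * G' (R ω))⁻¹ + S ω) ≤ x} := by
    filter_upwards [hRpos] with ω hω
    change (E ω / _ ≤ x) = (E ω / _ ≤ x)
    rw [hG'G hω]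
  have hint : ∫ t in 0..D ^ 2, exp (-(1 * x * (ρ * G' (sqrt t))⁻¹))
      = ∫ t in 0..D ^ 2, exp (-x / (G (sqrt t) * ρ)) := by
    refine intervalIntegral.integral_congr_ae (ae_of_all _ fun t ht ↦ ?_)
    rw [uIoc_of_le (sq_nonneg D)] at ht
    rw [hG'G (sqrt_pos.mpr ht.1)]
    congr 1
    ring
  rw [measure_congr hevent, ← measureReal_def,
    measureReal_div_add_le_of_iIndepFun (φ := fun r ↦ (ρ * G' r)⁻¹) one_pos hx (by fun_prop)
      hRm hEm hSm hindep hE (ae_of_all _ fun ω ↦ inv_pos.mpr (mul_pos hρ (hG'pos _)))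
      (ae_of_ae_map hSm.aemeasurable (hS ▸ ae_nonneg_gammaMeasure _ _)),
    integral_eq_of_cdf_eq_sq hD hRcdf (by fun_prop), hint, hS,
    integral_exp_neg_mul_gammaMeasure (sub_pos.mpr (Nat.one_lt_cast.mpr hM)) one_pos
      (by linarith), one_mul, one_div (1 + x), inv_rpow (by positivity),
    ← rpow_neg (by positivity), neg_sub, add_comm 1 x]
  ring

/-- Unconditional beam SINR distribution: with `R` the user distance (CDF `(r/D)²` on
`[0,D]`), `E ~ Exp(1)` signal power and `S ~ Gamma(M-1,1)` interference power, mutually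
independent, the SINR `E / ((ρ G(R))⁻¹ + S)` has CDF
`1 - (x+1)^{1-M} (1/D²) ∫₀^{D²} exp(-x/(G(√t)ρ)) dt` at every `x > 0`. -/
theorem beam_sinr_cdf_unconditional
    {Ω : Type*} [MeasurableSpace Ω] (P : Measure Ω) [IsProbabilityMeasure P]
    (M : ℕ) (hM : 2 ≤ M) (ρ D : ℝ) (hρ : 0 < ρ) (hD : 0 < D)
    (G : ℝ → ℝ) (hGpos : ∀ d, 0 < d → 0 < G d)
    (hGcont : ContinuousOn G (Set.Ioi 0)) (hGanti : AntitoneOn G (Set.Ioi 0))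
    (R E S : Ω → ℝ)
    (hRm : Measurable R) (hEm : Measurable E) (hSm : Measurable S)
    (hindep : iIndepFun ![R, E, S] P)
    (hR : ∀ r ∈ Set.Icc (0 : ℝ) D, (P {ω | R ω ≤ r}).toReal = (r / D) ^ 2)
    (hE : P.map E = expMeasure 1)
    (hS : P.map S = gammaMeasure ((M : ℝ) - 1) 1) :
    ∀ x : ℝ, 0 < x →
      (P {ω | E ω / ((ρ * G (R ω))⁻¹ + S ω) ≤ x}).toReal
        = 1 - (x + 1) ^ ((1 : ℝ) - M) * (1 / D ^ 2) *
            ∫ t in (0 : ℝ)..(D ^ 2), Real.exp (-x / (G (Real.sqrt t) * ρ)) :=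
  beam_sinr_cdf_unconditional_general P M hM ρ D hρ hD G hGpos hGcont R E S hRm hEm hSm hindep hR hE
    hS
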